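/- arXiv:0910.2252 — 2 statements merged into one kernel-verified Lean document; each statement's English description precedes it below -/
import Mathlib

section
/- The closed unit ball C = { f ∈ X : ‖f‖₁ ≤ 1 } of X = ℓ¹([0,1], ℂ) equals the intersection ⋂_{g} { f ∈ X : |∑_{x ∈ [0,1]} g(x) f(x)| ≤ 1 }, taken over all g ∈ C([0,1], ℂ) with ‖g‖_∞ ≤ 1; consequently C is closed in the weak topology σ(X, C[0,1]) induced by the pairing with C([0,1], ℂ). -/
/-! Pairing with a `g` of sup norm at most one never exceeds the `ℓ¹` norm. Conversely, by Tietze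
such a continuous `g` can equal the phase `conj (f x) / ‖f x‖` on any finite set `s`; the pairing
is then at least `2 ∑_{x ∈ s} ‖f x‖ - ‖f‖`, which tends to `‖f‖` as `s` grows. The ball is thus an
intersection of preimages of closed sets under the weakly continuous maps `f ↦ B f g`. -/

open Filter Topology ComplexConjugate

section Pairing

variable {α 𝕜 : Type*} [RCLike 𝕜]

lemma lp.hasSum_norm_one {E : α → Type*} [∀ i, NormedAddCommGroup (E i)] (f : lp E 1) :
    HasSum (fun i => ‖f i‖) ‖f‖ := by
  simpa using lp.hasSum_norm (p := 1) (by norm_num) f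

lemma norm_tsum_mul_le_tsum_norm {f g : α → 𝕜} (hf : Summable fun x => ‖f x‖)
    (hg : ∀ x, ‖g x‖ ≤ 1) : ‖∑' x, g x * f x‖ ≤ ∑' x, ‖f x‖ :=
  tsum_of_norm_bounded hf.hasSum fun x => by
    rw [norm_mul]
    exact mul_le_of_le_one_left (norm_nonneg _) (hg x)

lemma two_mul_sum_norm_sub_tsum_norm_le {f g : α → 𝕜} (hf : Summable fun x => ‖f x‖)
    (hg : ∀ x, ‖g x‖ ≤ 1) {s : Finset α} (hgs : ∀ x ∈ s, g x * f x = ‖f x‖) :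
    2 * ∑ x ∈ s, ‖f x‖ - ∑' x, ‖f x‖ ≤ ‖∑' x, g x * f x‖ := by
  have hgf : Summable fun x => g x * f x := hf.of_norm_bounded fun x => by
    rw [norm_mul]
    exact mul_le_of_le_one_left (norm_nonneg _) (hg x)
  have hhead : ∑ x ∈ s, g x * f x = ((∑ x ∈ s, ‖f x‖ : ℝ) : 𝕜) := by
    push_cast
    exact Finset.sum_congr rfl hgs
  have htail : ‖∑' x : ((s : Set α)ᶜ : Set α), g x * f x‖ ≤ ∑' x, ‖f x‖ - ∑ x ∈ s, ‖f x‖ := by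
    rw [← hf.sum_add_tsum_compl (s := s), add_sub_cancel_left]
    exact norm_tsum_mul_le_tsum_norm (hf.subtype _) fun x => hg x
  rw [← hgf.sum_add_tsum_compl (s := s), hhead]
  calc 2 * ∑ x ∈ s, ‖f x‖ - ∑' x, ‖f x‖
      = ∑ x ∈ s, ‖f x‖ - (∑' x, ‖f x‖ - ∑ x ∈ s, ‖f x‖) := by ring
    _ ≤ ‖((∑ x ∈ s, ‖f x‖ : ℝ) : 𝕜)‖ - ‖∑' x : ((s : Set α)ᶜ : Set α), g x * f x‖ := by
      rw [RCLike.norm_ofReal, abs_of_nonneg (Finset.sum_nonneg fun _ _ => norm_nonneg _)]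
      gcongr
    _ ≤ _ := norm_sub_le_norm_add _ _

lemma RCLike.conj_div_norm_mul_self (z : 𝕜) : conj z / ‖z‖ * z = ‖z‖ := by
  rw [div_mul_eq_mul_div, RCLike.conj_mul, sq, mul_self_div_self]

lemma RCLike.norm_conj_div_norm_le_one (z : 𝕜) : ‖conj z / ‖z‖‖ ≤ 1 := by
  rw [norm_div, RCLike.norm_conj, RCLike.norm_ofReal, abs_norm]
  exact div_self_le_one _

end Pairing

section Tietze

variable {X 𝕜 : Type*} [TopologicalSpace X] [CompactSpace X] [T4Space X] [RCLike 𝕜]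

lemma ContinuousMap.exists_norm_le_one_eqOn_finset (s : Finset X) {d : X → 𝕜}
    (hd : ∀ x ∈ s, ‖d x‖ ≤ 1) : ∃ g : C(X, 𝕜), ‖g‖ ≤ 1 ∧ ∀ x ∈ s, g x = d x := by
  let d₀ : C((s : Set X), 𝕜) := ⟨fun x => d x, continuous_of_discreteTopology⟩
  obtain ⟨g, hg_ball, hg_eq⟩ := ContinuousMap.exists_forall_mem_restrict_eq
    s.finite_toSet.isClosed d₀ (t := Metric.closedBall 0 1) fun x => by simpa [d₀] using hd x x.2
  refine ⟨g, (ContinuousMap.norm_le _ zero_le_one).mpr fun x => by simpa using hg_ball x,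
    fun x hx => congr($hg_eq ⟨x, hx⟩)⟩

lemma lp.norm_le_iff_forall_norm_tsum_mul_le (f : lp (fun _ : X => 𝕜) 1) {C : ℝ} :
    ‖f‖ ≤ C ↔ ∀ g : C(X, 𝕜), ‖g‖ ≤ 1 → ‖∑' x, g x * f x‖ ≤ C := by
  have hf := lp.hasSum_norm_one f
  constructor
  · intro hC g hg
    calc ‖∑' x, g x * f x‖ ≤ ∑' x, ‖f x‖ :=
          norm_tsum_mul_le_tsum_norm hf.summable fun x => (g.norm_coe_le_norm x).trans hg
      _ = ‖f‖ := hf.tsum_eq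
      _ ≤ C := hC
  · intro h
    have hpartial (s : Finset X) : 2 * ∑ x ∈ s, ‖f x‖ - ‖f‖ ≤ C := by
      obtain ⟨g, hg, hgs⟩ := ContinuousMap.exists_norm_le_one_eqOn_finset s
        fun x _ => RCLike.norm_conj_div_norm_le_one (f x)
      rw [← hf.tsum_eq]
      refine (two_mul_sum_norm_sub_tsum_norm_le hf.summable
        (fun x => (g.norm_coe_le_norm x).trans hg) fun x hx => ?_).trans (h g hg)
      rw [hgs x hx, RCLike.conj_div_norm_mul_self]
    have hlim : Tendsto (fun s : Finset X => 2 * ∑ x ∈ s, ‖f x‖ - ‖f‖) atTop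
        (𝓝 (2 * ‖f‖ - ‖f‖)) := (hf.const_mul 2).sub_const _
    linarith [le_of_tendsto' hlim hpartial]

end Tietze

/-- The closed unit ball `C` of `X = ℓ¹([0,1], ℂ)` equals the intersection of the sets
`{f : |∑_x g(x) f(x)| ≤ 1}` over all continuous `g` with `‖g‖_∞ ≤ 1`; consequently it is
closed in the weak topology `σ(X, C[0,1])` induced by the pairing
`B(f)(g) = ∑_x g(x) f(x)` with `C([0,1], ℂ)`. -/
theorem unit_ball_weakly_closed_l1_pairing_continuous
    (B : lp (fun _ : unitInterval => ℂ) 1 →ₗ[ℂ] C(unitInterval, ℂ) →ₗ[ℂ] ℂ)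
    (hB : ∀ (f : lp (fun _ : unitInterval => ℂ) 1) (g : C(unitInterval, ℂ)),
      B f g = ∑' x : unitInterval, g x * f x) :
    ({ f : lp (fun _ : unitInterval => ℂ) 1 | ‖f‖ ≤ 1 } =
        ⋂ g ∈ { g : C(unitInterval, ℂ) | ‖g‖ ≤ 1 },
          { f : lp (fun _ : unitInterval => ℂ) 1 |
            ‖∑' x : unitInterval, g x * f x‖ ≤ 1 }) ∧
      IsClosed (show Set (WeakBilin B) from
        { f : lp (fun _ : unitInterval => ℂ) 1 | ‖f‖ ≤ 1 }) := by
  have hball : { f : lp (fun _ : unitInterval => ℂ) 1 | ‖f‖ ≤ 1 } =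
      ⋂ g ∈ { g : C(unitInterval, ℂ) | ‖g‖ ≤ 1 },
        { f : lp (fun _ : unitInterval => ℂ) 1 | ‖∑' x : unitInterval, g x * f x‖ ≤ 1 } := by
    ext f
    simpa using lp.norm_le_iff_forall_norm_tsum_mul_le f
  refine ⟨hball, (congrArg (IsClosed (X := WeakBilin B)) hball).mpr ?_⟩
  refine isClosed_biInter fun g _ => ?_
  simp_rw [← hB]
  exact isClosed_le (WeakBilin.eval_continuous B g).norm continuous_const
end

section
/- The map F : X → C([0,1], ℂ)* defined by F(f)(g) = ∑_{x ∈ [0,1]} f(x) g(x) is a linear isometry from X = ℓ¹([0,1], ℂ) into the continuous dual of C([0,1], ℂ): for all f ∈ X, the operator norm of F(f) equals ‖f‖₁. -/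
/-!
Hölder's inequality gives `‖F f‖ ≤ ‖f‖`. Conversely, for a finite set `s`, Tietze's extension
theorem yields a continuous `g` with `‖g‖ ≤ 1` that agrees on `s` with the conjugate phase of `f`.
Then `‖F f g‖ ≥ ∑_{x ∈ s} ‖f x‖ - ∑_{x ∉ s} ‖f x‖ = 2 ∑_{x ∈ s} ‖f x‖ - ‖f‖`, and letting `s` grow
gives `‖F f‖ ≥ ‖f‖`.
-/

theorem ContinuousMap.exists_norm_le_one_forall_mem_eq {X 𝕜 : Type*} [TopologicalSpace X]
    [NormalSpace X] [T1Space X] [RCLike 𝕜] (s : Finset X) (c : X → 𝕜) (hc : ∀ x, ‖c x‖ ≤ 1) :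
    ∃ g : C(X, 𝕜), (∀ x, ‖g x‖ ≤ 1) ∧ ∀ x ∈ s, g x = c x := by
  obtain ⟨g, hg, hgs⟩ := ContinuousMap.exists_forall_mem_restrict_eq s.finite_toSet.isClosed
    ⟨fun x : (s : Set X) => c x, continuous_of_discreteTopology⟩
    (t := Metric.closedBall 0 1) (by simpa using fun x _ => hc x)
  exact ⟨g, by simpa using hg, fun x hx => DFunLike.congr_fun hgs ⟨x, hx⟩⟩

namespace lp

variable {α : Type*}

theorem hasSum_norm_one_s7 {E : α → Type*} [∀ i, NormedAddCommGroup (E i)] (f : lp E 1) :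
    HasSum (fun i => ‖f i‖) ‖f‖ := by
  simpa using hasSum_norm (p := 1) (by norm_num) f

variable {𝕜 : Type*} [RCLike 𝕜] (f : lp (fun _ : α => 𝕜) 1) {g : α → 𝕜} {C : ℝ}

theorem summable_mul_of_norm_le (hg : ∀ x, ‖g x‖ ≤ C) : Summable fun x => f x * g x :=
  .of_norm_bounded ((hasSum_norm_one_s7 f).mul_right C).summable fun x => by
    rw [norm_mul]; gcongr; exact hg x

theorem norm_tsum_mul_le (hg : ∀ x, ‖g x‖ ≤ C) : ‖∑' x, f x * g x‖ ≤ ‖f‖ * C :=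
  tsum_of_norm_bounded ((hasSum_norm_one_s7 f).mul_right C) fun x => by
    rw [norm_mul]; gcongr; exact hg x

theorem two_mul_sum_norm_sub_norm_le {f : lp (fun _ : α => 𝕜) 1} (s : Finset α)
    (hg : ∀ x, ‖g x‖ ≤ 1) (hfg : ∀ x ∈ s, f x * g x = ‖f x‖) :
    2 * ∑ x ∈ s, ‖f x‖ - ‖f‖ ≤ ‖∑' x, f x * g x‖ := by
  have hsplit := (summable_mul_of_norm_le f hg).sum_add_tsum_subtype_compl s
  have hmain : ∑ x ∈ s, f x * g x = ((∑ x ∈ s, ‖f x‖ : ℝ) : 𝕜) := by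
    rw [RCLike.ofReal_sum]; exact Finset.sum_congr rfl hfg
  have htail : ‖∑' x : {x // x ∉ s}, f x * g x‖ ≤ ‖f‖ - ∑ x ∈ s, ‖f x‖ := by
    refine tsum_of_norm_bounded ((s.hasSum_compl_iff (f := fun x => ‖f x‖)).2 ?_) fun x => ?_
    · simpa using hasSum_norm_one_s7 f
    · rw [norm_mul]; simpa using mul_le_mul_of_nonneg_left (hg x) (norm_nonneg (f x))
  have hsum : ‖((∑ x ∈ s, ‖f x‖ : ℝ) : 𝕜)‖ = ∑ x ∈ s, ‖f x‖ := by
    rw [RCLike.norm_ofReal, abs_of_nonneg (Finset.sum_nonneg fun x _ => norm_nonneg _)]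
  rw [← hsplit, hmain]
  linarith [norm_sub_le_norm_add ((∑ x ∈ s, ‖f x‖ : ℝ) : 𝕜) (∑' x : {x // x ∉ s}, f x * g x)]

section ContinuousMap

variable [TopologicalSpace α] [CompactSpace α]

noncomputable def toStrongDualContinuousMap : lp (fun _ : α => 𝕜) 1 →L[𝕜] StrongDual 𝕜 C(α, 𝕜) :=
  LinearMap.mkContinuous₂
    (LinearMap.mk₂ 𝕜 (fun f g => ∑' x, f x * g x)
      (fun f₁ f₂ g => by
        simp only [coeFn_add, Pi.add_apply, add_mul]
        exact (summable_mul_of_norm_le f₁ g.norm_coe_le_norm).tsum_add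
          (summable_mul_of_norm_le f₂ g.norm_coe_le_norm))
      (fun c f g => by
        simp only [coeFn_smul, Pi.smul_apply, smul_eq_mul, mul_assoc, tsum_mul_left])
      (fun f g₁ g₂ => by
        simp only [ContinuousMap.add_apply, mul_add]
        exact (summable_mul_of_norm_le f g₁.norm_coe_le_norm).tsum_add
          (summable_mul_of_norm_le f g₂.norm_coe_le_norm))
      (fun c f g => by
        simp only [ContinuousMap.smul_apply, smul_eq_mul, mul_left_comm _ c, tsum_mul_left]))
    1 fun f g => by simpa using norm_tsum_mul_le f g.norm_coe_le_norm

theorem norm_toStrongDualContinuousMap_le : ‖toStrongDualContinuousMap f‖ ≤ ‖f‖ :=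
  ContinuousLinearMap.opNorm_le_bound _ (norm_nonneg f) fun g =>
    norm_tsum_mul_le f g.norm_coe_le_norm

theorem norm_le_norm_toStrongDualContinuousMap [T2Space α] :
    ‖f‖ ≤ ‖toStrongDualContinuousMap f‖ := by
  choose c hc hcf using fun x => RCLike.exists_norm_eq_mul_self (f x)
  have hbound (s : Finset α) : 2 * ∑ x ∈ s, ‖f x‖ - ‖f‖ ≤ ‖toStrongDualContinuousMap f‖ := by
    obtain ⟨g, hg, hgs⟩ := ContinuousMap.exists_norm_le_one_forall_mem_eq s c fun x => (hc x).le
    calc 2 * ∑ x ∈ s, ‖f x‖ - ‖f‖ ≤ ‖toStrongDualContinuousMap f g‖ :=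
          two_mul_sum_norm_sub_norm_le s hg fun x hx => by rw [hgs x hx, mul_comm, hcf]
      _ ≤ ‖toStrongDualContinuousMap f‖ :=
          (toStrongDualContinuousMap f).unit_le_opNorm g
            ((ContinuousMap.norm_le g zero_le_one).2 hg)
  have := le_of_tendsto' (((hasSum_norm_one_s7 f).const_mul 2).sub_const ‖f‖) hbound
  linarith

theorem norm_toStrongDualContinuousMap [T2Space α] : ‖toStrongDualContinuousMap f‖ = ‖f‖ :=
  (norm_toStrongDualContinuousMap_le f).antisymm (norm_le_norm_toStrongDualContinuousMap f)

end ContinuousMap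

end lp

/-- The map `F : X → C([0,1], ℂ)*`, `F(f)(g) = ∑_x f(x) g(x)`, is a linear isometry from
`X = ℓ¹([0,1], ℂ)` into the continuous dual of `C([0,1], ℂ)`. -/
theorem exists_linear_isometry_l1_into_dual_continuous :
    ∃ F : lp (fun _ : unitInterval => ℂ) 1 →ₗᵢ[ℂ]
        StrongDual ℂ C(unitInterval, ℂ),
      ∀ (f : lp (fun _ : unitInterval => ℂ) 1) (g : C(unitInterval, ℂ)),
        F f g = ∑' x : unitInterval, f x * g x :=
  ⟨⟨lp.toStrongDualContinuousMap.toLinearMap, fun f => lp.norm_toStrongDualContinuousMap f⟩,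
    fun _ _ => rfl⟩
end
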